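/- For all integers r ≥ 0 and t ≥ 0, E(r,t) is the sum of the t largest elements of the multiset {(1-p)·β_p(j,r) : j ∈ ℕ}; equivalently, E(r,t) equals the maximum of ∑_{j∈S} (1-p)·β_p(j,r) over all finite subsets S ⊆ ℕ with |S| = t, and this maximum is attained at S = {0,1,…,t-1}. -/

import Mathlib

/-- `betaP p t r = ∑_{i=0}^{r-1} C(t,i) (1-p)^i p^(t-i)`. -/
noncomputable def betaP (p : ℝ) (t r : ℕ) : ℝ :=
  ∑ i ∈ Finset.range r, (t.choose i : ℝ) * (1 - p) ^ i * p ^ (t - i)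

/-- Expected rank function `E(r,t) = ∑_{i=0}^{t} C(t,i) (1-p)^i p^(t-i) * min{i,r}`. -/
noncomputable def expRank (p : ℝ) (r t : ℕ) : ℝ :=
  ∑ i ∈ Finset.range (t + 1),
    (t.choose i : ℝ) * (1 - p) ^ i * p ^ (t - i) * ((min i r : ℕ) : ℝ)

/-!
Let `b t i = C(t,i) (1-p)^i p^(t-i)` be the binomial weights, so that `E(r,t)` and `β_p(t,r)` are
the expectations of `min i r` and of `[i < r]` under `Bin(t, 1-p)`. Pascal's rule for the weights
says that the expectation of `g` under `Bin(t+1)` is `p` times that of `g` plus `1-p` times that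
of `g (· + 1)` under `Bin(t)`. Since `min (i+1) r = min i r + [i < r]`, this gives
`E(r,t+1) = E(r,t) + (1-p) β_p(t,r)`, hence `E(r,t) = ∑_{j<t} (1-p) β_p(j,r)`; since `[i < r]` is
antitone in `i`, it shows that `β_p(t,r)` is antitone in `t`. The sum of an antitone sequence
over any `t`-element set of indices is at most its sum over `{0,…,t-1}`.
-/

open Finset

theorem Finset.sum_le_sum_range_of_antitone {M : Type*} [AddCommMonoid M] [PartialOrder M]
    [IsOrderedAddMonoid M] {f : ℕ → M} (hf : Antitone f) {S : Finset ℕ} {t : ℕ}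
    (hS : #S = t) : ∑ j ∈ S, f j ≤ ∑ j ∈ range t, f j := by
  calc ∑ j ∈ S, f j
      ≤ ∑ j ∈ S ∩ range t, f j + #(S \ range t) • f t := by
        rw [← sum_inter_add_sum_sdiff S (range t)]
        gcongr
        exact sum_le_card_nsmul _ _ _ fun j hj => hf (by simpa using (mem_sdiff.1 hj).2)
    _ = ∑ j ∈ range t ∩ S, f j + #(range t \ S) • f t := by
        rw [inter_comm, card_sdiff_comm (by rw [hS, card_range])]
    _ ≤ ∑ j ∈ range t, f j := by
        rw [← sum_inter_add_sum_sdiff (range t) S]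
        gcongr
        exact card_nsmul_le_sum _ _ _ fun j hj => hf (mem_range.1 (mem_sdiff.1 hj).1).le

noncomputable def binomWeight (p : ℝ) (t i : ℕ) : ℝ :=
  (t.choose i : ℝ) * (1 - p) ^ i * p ^ (t - i)

section binomWeight

variable {p : ℝ}

lemma binomWeight_nonneg (hp0 : 0 ≤ p) (hp1 : p ≤ 1) (t i : ℕ) : 0 ≤ binomWeight p t i := by
  have hq : 0 ≤ 1 - p := sub_nonneg.2 hp1
  unfold binomWeight
  positivity

lemma binomWeight_eq_zero_of_lt {t i : ℕ} (h : t < i) : binomWeight p t i = 0 := by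
  simp [binomWeight, Nat.choose_eq_zero_of_lt h]

lemma binomWeight_succ_zero (t : ℕ) : binomWeight p (t + 1) 0 = p * binomWeight p t 0 := by
  simp [binomWeight, pow_succ, mul_comm]

lemma binomWeight_succ_succ (t i : ℕ) :
    binomWeight p (t + 1) (i + 1) = p * binomWeight p t (i + 1) + (1 - p) * binomWeight p t i := by
  simp only [binomWeight, Nat.choose_succ_succ', Nat.cast_add, Nat.add_sub_add_right]
  rcases le_or_gt (i + 1) t with h | h
  · rw [show t - i = t - (i + 1) + 1 by omega]
    ring
  · rw [Nat.choose_eq_zero_of_lt h]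
    ring

lemma sum_binomWeight_succ (g : ℕ → ℝ) (t : ℕ) :
    ∑ i ∈ range (t + 2), binomWeight p (t + 1) i * g i =
      p * ∑ i ∈ range (t + 1), binomWeight p t i * g i
        + (1 - p) * ∑ i ∈ range (t + 1), binomWeight p t i * g (i + 1) := by
  have hextend : ∑ i ∈ range (t + 2), binomWeight p t i * g i =
      ∑ i ∈ range (t + 1), binomWeight p t i * g i := by
    rw [sum_range_succ, binomWeight_eq_zero_of_lt (Nat.lt_succ_self t), zero_mul, add_zero]
  rw [sum_range_succ', binomWeight_succ_zero, ← hextend, sum_range_succ' _ (t + 1)]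
  simp only [binomWeight_succ_succ, add_mul, sum_add_distrib, mul_add, mul_sum, mul_assoc]
  ring

lemma sum_binomWeight_succ_le_of_antitone (hp0 : 0 ≤ p) (hp1 : p ≤ 1) {g : ℕ → ℝ}
    (hg : Antitone g) (t : ℕ) :
    ∑ i ∈ range (t + 2), binomWeight p (t + 1) i * g i ≤
      ∑ i ∈ range (t + 1), binomWeight p t i * g i := by
  have hle : ∑ i ∈ range (t + 1), binomWeight p t i * g (i + 1) ≤
      ∑ i ∈ range (t + 1), binomWeight p t i * g i :=
    sum_le_sum fun i _ =>
      mul_le_mul_of_nonneg_left (hg i.le_succ) (binomWeight_nonneg hp0 hp1 t i)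
  rw [sum_binomWeight_succ]
  linarith [mul_le_mul_of_nonneg_left hle (sub_nonneg.2 hp1)]

end binomWeight

lemma betaP_eq_sum_binomWeight (p : ℝ) (t r : ℕ) :
    betaP p t r = ∑ i ∈ range (t + 1), binomWeight p t i * if i < r then 1 else 0 := by
  simp only [mul_ite, mul_one, mul_zero, ← sum_filter]
  have hfilter : (range (t + 1)).filter (· < r) = range (min (t + 1) r) := by
    ext i
    simp only [mem_filter, mem_range]
    omega
  rw [hfilter, betaP]
  refine (sum_subset (range_subset_range.2 (min_le_right _ _)) fun i hi hi' => ?_).symm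
  simp only [mem_range] at hi hi'
  exact binomWeight_eq_zero_of_lt (by omega)

lemma expRank_succ (p : ℝ) (r t : ℕ) :
    expRank p r (t + 1) = expRank p r t + (1 - p) * betaP p t r := by
  have hmin : ∀ i, ((min (i + 1) r : ℕ) : ℝ) = (min i r : ℕ) + if i < r then 1 else 0 := by
    intro i
    split_ifs with h
    · rw [show min (i + 1) r = min i r + 1 by omega, Nat.cast_succ]
    · rw [show min (i + 1) r = min i r by omega, add_zero]
  have hrec := sum_binomWeight_succ (p := p) (fun i => ((min i r : ℕ) : ℝ)) t
  simp only [hmin, mul_add, sum_add_distrib] at hrec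
  rw [betaP_eq_sum_binomWeight]
  unfold expRank
  simp only [binomWeight] at hrec ⊢
  linear_combination hrec

lemma expRank_eq_sum_betaP (p : ℝ) (r t : ℕ) :
    expRank p r t = ∑ j ∈ range t, (1 - p) * betaP p j r := by
  induction t with
  | zero => simp [expRank]
  | succ t ih => rw [expRank_succ, ih, sum_range_succ]

lemma betaP_antitone_left {p : ℝ} (hp0 : 0 ≤ p) (hp1 : p ≤ 1) (r : ℕ) :
    Antitone fun t => betaP p t r := by
  refine antitone_nat_of_succ_le fun t => ?_
  simp only [betaP_eq_sum_binomWeight]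
  exact sum_binomWeight_succ_le_of_antitone hp0 hp1
    (fun i j hij => by split_ifs <;> first | omega | norm_num) t

theorem stmt9 (p : ℝ) (hp0 : 0 < p) (hp1 : p < 1) (r t : ℕ) :
    IsGreatest {x : ℝ | ∃ S : Finset ℕ, S.card = t ∧
      x = ∑ j ∈ S, (1 - p) * betaP p j r} (expRank p r t) ∧
    expRank p r t = ∑ j ∈ Finset.range t, (1 - p) * betaP p j r := by
  have hanti : Antitone fun j => (1 - p) * betaP p j r :=
    (betaP_antitone_left hp0.le hp1.le r).const_mul (by linarith)
  refine ⟨⟨⟨range t, card_range t, expRank_eq_sum_betaP p r t⟩, ?_⟩, expRank_eq_sum_betaP p r t⟩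
  rintro x ⟨S, hS, rfl⟩
  rw [expRank_eq_sum_betaP]
  exact sum_le_sum_range_of_antitone hanti hS
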